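/- arXiv:2402.04909 — 4 statements merged into one kernel-verified Lean document; each statement's English description precedes it below -/
import Mathlib

section
/- Let F be a closed subset of Euclidean space ℝⁿ and let x, y ∈ F. Suppose there exists a path in F from x to y of finite length. Then there exists a shortest path in F from x to y, i.e., a path γ* in F from x to y such that len(γ*) ≤ len(γ) for every path γ in F from x to y. -/
/-!
Reparametrizing a path of finite length `L` by arc length makes it `L`-Lipschitz without increasing
its length. So, if some path in `F` from `x` to `y` has length `L`, the infimum of lengths can be
computed over `L`-Lipschitz maps with values in the compact set `F ∩ closedBall x L`, a class that
is compact for pointwise convergence by Tychonoff's theorem. Length is lower semicontinuous for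
pointwise convergence, so it attains its minimum there, and a minimizer is a shortest path.
-/

open Set

noncomputable section

/-- `γ`, restricted to `[0,1]`, is a path in `F` from `x` to `y`. -/
def IsPathIn {E : Type*} [TopologicalSpace E] (F : Set E) (γ : ℝ → E) (x y : E) : Prop :=
  ContinuousOn γ (Icc 0 1) ∧ (∀ s ∈ Icc (0:ℝ) 1, γ s ∈ F) ∧ γ 0 = x ∧ γ 1 = y

/-- `γ` is a shortest path in `F` from `x` to `y`, where the length of a path is its
total variation on `[0,1]`. -/
def IsShortestPathIn {E : Type*} [PseudoEMetricSpace E] (F : Set E) (γ : ℝ → E) (x y : E) :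
    Prop :=
  IsPathIn F γ x y ∧
    ∀ γ' : ℝ → E, IsPathIn F γ' x y → eVariationOn γ (Icc 0 1) ≤ eVariationOn γ' (Icc 0 1)

/-- `γ₀` and `γ₁` (as paths parametrized on `[0,1]`) are homotopic relative to their
endpoints through maps with values in `S`. -/
def PathHomotopicIn {E : Type*} [TopologicalSpace E] (S : Set E) (γ₀ γ₁ : ℝ → E) : Prop :=
  ∃ H : ℝ × ℝ → E,
    ContinuousOn H ((Icc (0:ℝ) 1) ×ˢ (Icc (0:ℝ) 1)) ∧
    (∀ p ∈ (Icc (0:ℝ) 1) ×ˢ (Icc (0:ℝ) 1), H p ∈ S) ∧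
    (∀ s ∈ Icc (0:ℝ) 1, H (s, 0) = γ₀ s) ∧
    (∀ s ∈ Icc (0:ℝ) 1, H (s, 1) = γ₁ s) ∧
    (∀ t ∈ Icc (0:ℝ) 1, H (0, t) = γ₀ 0) ∧
    (∀ t ∈ Icc (0:ℝ) 1, H (1, t) = γ₀ 1)

/-- The restriction of `γ` to `[s₁, s₂]`, reparametrized to `[0,1]`. -/
def subPath {E : Type*} (γ : ℝ → E) (s₁ s₂ : ℝ) : ℝ → E := fun s => γ (s₁ + s * (s₂ - s₁))

/-- The straight-line path from `p` to `q`. -/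
def linePath {E : Type*} [AddCommGroup E] [Module ℝ E] (p q : E) : ℝ → E :=
  fun t => (1 - t) • p + t • q

open scoped NNReal ENNReal

theorem LocallyBoundedVariationOn.continuousOn_variationOnFromTo {α E : Type*} [LinearOrder α]
    [TopologicalSpace α] [OrderTopology α] [PseudoMetricSpace E] {f : α → E} {s : Set α}
    (hf : LocallyBoundedVariationOn f s) (hc : ContinuousOn f s) {a : α} (ha : a ∈ s) :
    ContinuousOn (variationOnFromTo f s a) s := by
  intro b hb
  have hleft := variationOnFromTo.tendsto_left ha hb hf ((hc b hb).mono inter_subset_left)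
  have hright := variationOnFromTo.tendsto_right ha hb hf ((hc b hb).mono inter_subset_left)
  rw [dist_self, sub_zero] at hleft
  rw [dist_self, add_zero] at hright
  have hcont : ContinuousWithinAt (variationOnFromTo f s a) (s ∩ Iio b ∪ s ∩ Ioi b) b :=
    ContinuousWithinAt.union hleft hright
  refine (continuousWithinAt_insert_self.2 hcont).mono fun t ht => ?_
  rcases lt_trichotomy t b with h | rfl | h
  exacts [Or.inr (Or.inl ⟨ht, h⟩), Or.inl rfl, Or.inr (Or.inr ⟨ht, h⟩)]

theorem BoundedVariationOn.image_variationOnFromTo_Icc {E : Type*} [PseudoMetricSpace E]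
    {f : ℝ → E} {a b : ℝ} (hab : a ≤ b) (hf : BoundedVariationOn f (Icc a b))
    (hc : ContinuousOn f (Icc a b)) :
    variationOnFromTo f (Icc a b) a '' Icc a b = Icc 0 (eVariationOn f (Icc a b)).toReal := by
  have hloc := hf.locallyBoundedVariationOn
  have hφa : variationOnFromTo f (Icc a b) a a = 0 := variationOnFromTo.self f _ a
  have hφb : variationOnFromTo f (Icc a b) a b = (eVariationOn f (Icc a b)).toReal := by
    rw [variationOnFromTo.eq_of_le _ _ hab, inter_self]
  rw [← hφa, ← hφb]
  exact ((variationOnFromTo.monotoneOn hloc (left_mem_Icc.2 hab)).image_Icc_subset).antisymm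
    (intermediate_value_Icc hab (hloc.continuousOn_variationOnFromTo hc (left_mem_Icc.2 hab)))

theorem HasConstantSpeedOnWith.lipschitzOnWith {E : Type*} [PseudoEMetricSpace E] {f : ℝ → E}
    {s : Set ℝ} {l : ℝ≥0} (h : HasConstantSpeedOnWith f s l) : LipschitzOnWith l f s := by
  intro p hp q hq
  wlog hpq : p ≤ q generalizing p q
  · rw [edist_comm, edist_comm p]
    exact this hq hp (le_of_not_ge hpq)
  calc edist (f p) (f q) ≤ eVariationOn f (s ∩ Icc p q) :=
        eVariationOn.edist_le f ⟨hp, le_rfl, hpq⟩ ⟨hq, hpq, le_rfl⟩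
    _ = ENNReal.ofReal (l * (q - p)) := hasConstantSpeedOnWith_iff_ordered.1 h hp hq hpq
    _ = l * edist p q := by
      rw [ENNReal.ofReal_mul l.coe_nonneg, ENNReal.ofReal_coe_nnreal, edist_dist, dist_comm,
        Real.dist_eq, abs_of_nonneg (sub_nonneg.2 hpq)]

theorem BoundedVariationOn.exists_lipschitzWith_reparam {E : Type*} [MetricSpace E] {γ : ℝ → E}
    (hf : BoundedVariationOn γ (Icc 0 1)) (hc : ContinuousOn γ (Icc 0 1)) :
    ∃ γ' : ℝ → E, LipschitzWith (eVariationOn γ (Icc 0 1)).toNNReal γ' ∧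
      range γ' ⊆ γ '' Icc 0 1 ∧ γ' 0 = γ 0 ∧ γ' 1 = γ 1 ∧
      eVariationOn γ' (Icc 0 1) ≤ eVariationOn γ (Icc 0 1) := by
  set L := (eVariationOn γ (Icc 0 1)).toNNReal
  set φ := variationOnFromTo γ (Icc 0 1) 0
  set g := naturalParameterization γ (Icc 0 1) 0
  have hloc := hf.locallyBoundedVariationOn
  have h0 : (0 : ℝ) ∈ Icc 0 1 := left_mem_Icc.2 zero_le_one
  have hφ : φ '' Icc 0 1 = Icc 0 (L : ℝ) := hf.image_variationOnFromTo_Icc zero_le_one hc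
  have hg : HasUnitSpeedOn g (Icc 0 (L : ℝ)) :=
    hφ ▸ has_unit_speed_naturalParameterization γ hloc h0
  have hgφ : ∀ t ∈ Icc (0 : ℝ) 1, g (φ t) = γ t := fun t ht =>
    edist_eq_zero.1 (edist_naturalParameterization_eq_zero hloc h0 ht)
  set ψ : ℝ → ℝ := fun t => projIcc 0 (L : ℝ) L.coe_nonneg (L * t)
  have hψ : LipschitzWith L ψ := by
    have := (LipschitzWith.subtype_val _).comp
      ((LipschitzWith.projIcc L.coe_nonneg).comp (lipschitzWith_smul (L : ℝ)))
    rwa [one_mul, one_mul, NNReal.nnnorm_eq] at this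
  have hψL : ∀ t, ψ t ∈ Icc (0 : ℝ) L := fun t => Subtype.mem _
  have hψ0 : ψ 0 = φ 0 := by simp [ψ, φ, projIcc_left, variationOnFromTo.self]
  have hψ1 : ψ 1 = φ 1 := by
    simp only [ψ, φ, mul_one, projIcc_right, variationOnFromTo.eq_of_le _ _ zero_le_one,
      inter_self]
    rfl
  refine ⟨g ∘ ψ, ?_, ?_, by simp [hψ0, hgφ 0 h0],
    by simp [hψ1, hgφ 1 (right_mem_Icc.2 zero_le_one)], ?_⟩
  · simpa using
      lipschitzOnWith_univ.1 (hg.lipschitzOnWith.comp hψ.lipschitzOnWith fun t _ => hψL t)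
  · rintro _ ⟨t, rfl⟩
    exact ⟨_, Function.invFunOn_mem (hφ.ge (hψL t)), rfl⟩
  · calc eVariationOn (g ∘ ψ) (Icc 0 1) ≤ eVariationOn g (Icc 0 (L : ℝ)) :=
          eVariationOn.comp_le_of_monotoneOn g ψ
            (fun s _ t _ hst => monotone_projIcc _ (mul_le_mul_of_nonneg_left hst L.coe_nonneg))
            fun t _ => hψL t
      _ = eVariationOn γ (Icc 0 1) := by
          have hL : (L : ℝ) ∈ Icc 0 (L : ℝ) := right_mem_Icc.2 L.coe_nonneg
          rw [← inter_self (Icc _ _), hg (left_mem_Icc.2 L.coe_nonneg) hL, NNReal.coe_one, one_mul,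
            sub_zero, ENNReal.ofReal_coe_nnreal, ENNReal.coe_toNNReal hf]

section LipschitzPaths

variable {E : Type*}

/-- Lipschitz on all of `ℝ` and `K`-valued everywhere, not just on `[0,1]`, so that the class is
compact for pointwise convergence. -/
def lipschitzPathsIn [PseudoEMetricSpace E] (K : Set E) (L : ℝ≥0) (x y : E) : Set (ℝ → E) :=
  {γ | LipschitzWith L γ ∧ (∀ t, γ t ∈ K) ∧ γ 0 = x ∧ γ 1 = y}

theorem isCompact_lipschitzPathsIn [EMetricSpace E] {K : Set E} (hK : IsCompact K) (L : ℝ≥0)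
    (x y : E) : IsCompact (lipschitzPathsIn K L x y) := by
  have heq : lipschitzPathsIn K L x y =
      {γ | LipschitzWith L γ} ∩ univ.pi (fun _ => K) ∩ {γ | γ 0 = x} ∩ {γ | γ 1 = y} := by
    ext γ
    simp [lipschitzPathsIn, and_assoc]
  refine (isCompact_univ_pi fun _ : ℝ => hK).of_isClosed_subset ?_ fun γ hγ t _ => hγ.2.1 t
  rw [heq]
  exact (((isClosed_setOfPred_lipschitzWith L).inter
    (isClosed_set_pi fun _ _ => hK.isClosed)).inter
      (isClosed_eq (continuous_apply 0) continuous_const)).inter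
        (isClosed_eq (continuous_apply 1) continuous_const)

theorem isPathIn_of_mem_lipschitzPathsIn [PseudoEMetricSpace E] {F K : Set E} {L : ℝ≥0}
    {x y : E} {γ : ℝ → E} (hγ : γ ∈ lipschitzPathsIn K L x y) (hKF : K ⊆ F) :
    IsPathIn F γ x y :=
  ⟨hγ.1.continuous.continuousOn, fun t _ => hKF (hγ.2.1 t), hγ.2.2⟩

theorem IsPathIn.exists_mem_lipschitzPathsIn [MetricSpace E] {F : Set E} {x y : E} {γ : ℝ → E}
    (hγ : IsPathIn F γ x y) {L : ℝ≥0} (hL : eVariationOn γ (Icc 0 1) ≤ L) :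
    ∃ γ' ∈ lipschitzPathsIn (F ∩ Metric.closedBall x L) L x y,
      eVariationOn γ' (Icc 0 1) ≤ eVariationOn γ (Icc 0 1) := by
  obtain ⟨hc, hF, rfl, rfl⟩ := hγ
  have hfin : eVariationOn γ (Icc 0 1) ≠ ⊤ := ne_top_of_le_ne_top ENNReal.coe_ne_top hL
  obtain ⟨γ', hlip, hrange, h0, h1, hlen⟩ :=
    BoundedVariationOn.exists_lipschitzWith_reparam hfin hc
  have hlenL : (eVariationOn γ (Icc 0 1)).toNNReal ≤ L :=
    (ENNReal.toNNReal_mono ENNReal.coe_ne_top hL).trans_eq (ENNReal.toNNReal_coe L)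
  refine ⟨γ', ⟨hlip.weaken hlenL, fun t => ?_, h0, h1⟩, hlen⟩
  obtain ⟨s, hs, hst⟩ := hrange ⟨t, rfl⟩
  refine hst ▸ ⟨hF s hs, ?_⟩
  rw [Metric.mem_closedBall, dist_edist]
  exact ENNReal.toReal_le_of_le_ofReal L.coe_nonneg <|
    (eVariationOn.edist_le γ hs (left_mem_Icc.2 zero_le_one)).trans
      (hL.trans_eq ENNReal.ofReal_coe_nnreal.symm)

end LipschitzPaths

theorem lowerSemicontinuous_eVariationOn {α E : Type*} [LinearOrder α] [PseudoEMetricSpace E]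
    (s : Set α) : LowerSemicontinuous fun f : α → E => eVariationOn f s := fun f _ hv =>
  eVariationOn.lowerSemicontinuous_aux (fun t _ => (continuous_apply t).tendsto f) hv

theorem exists_isShortestPathIn {E : Type*} [MetricSpace E] [ProperSpace E] {F : Set E}
    (hF : IsClosed F) {x y : E}
    (h : ∃ γ : ℝ → E, IsPathIn F γ x y ∧ eVariationOn γ (Icc 0 1) ≠ ⊤) :
    ∃ γ : ℝ → E, IsShortestPathIn F γ x y := by
  obtain ⟨γ₀, hγ₀, hfin⟩ := h
  set L := (eVariationOn γ₀ (Icc 0 1)).toNNReal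
  have hγ₀L : eVariationOn γ₀ (Icc 0 1) ≤ L := (ENNReal.coe_toNNReal hfin).ge
  set A := lipschitzPathsIn (F ∩ Metric.closedBall x L) L x y
  have hA : IsCompact A :=
    isCompact_lipschitzPathsIn ((isCompact_closedBall x L).inter_left hF) L x y
  obtain ⟨γ₁, hγ₁A, hγ₁⟩ := hγ₀.exists_mem_lipschitzPathsIn hγ₀L
  obtain ⟨γ, hγA, hmin⟩ :=
    ((lowerSemicontinuous_eVariationOn _).lowerSemicontinuousOn A).exists_isMinOn ⟨γ₁, hγ₁A⟩ hA
  refine ⟨γ, isPathIn_of_mem_lipschitzPathsIn hγA inter_subset_left, fun γ' hγ' => ?_⟩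
  rcases le_total (eVariationOn γ' (Icc 0 1)) L with hγ'L | hLγ'
  · obtain ⟨γ'', hγ''A, hγ''⟩ := hγ'.exists_mem_lipschitzPathsIn hγ'L
    exact (hmin hγ''A).trans hγ''
  · exact (hmin hγ₁A).trans (hγ₁.trans (hγ₀L.trans hLγ'))

theorem stmt_1_general {n : ℕ} (F : Set (EuclideanSpace ℝ (Fin n))) (hF : IsClosed F)
    (x y : EuclideanSpace ℝ (Fin n))
    (hfin : ∃ γ : ℝ → EuclideanSpace ℝ (Fin n),
      IsPathIn F γ x y ∧ eVariationOn γ (Icc 0 1) ≠ ⊤) :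
    ∃ γstar : ℝ → EuclideanSpace ℝ (Fin n), IsShortestPathIn F γstar x y :=
  exists_isShortestPathIn hF hfin

/-- In a closed subset of Euclidean space, if two points are joined by a finite-length path
in the set, then there exists a shortest path in the set between them. -/
theorem stmt_1 {n : ℕ} (F : Set (EuclideanSpace ℝ (Fin n))) (hF : IsClosed F)
    (x y : EuclideanSpace ℝ (Fin n)) (hx : x ∈ F) (hy : y ∈ F)
    (hfin : ∃ γ : ℝ → EuclideanSpace ℝ (Fin n),
      IsPathIn F γ x y ∧ eVariationOn γ (Icc 0 1) ≠ ⊤) :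
    ∃ γstar : ℝ → EuclideanSpace ℝ (Fin n), IsShortestPathIn F γstar x y :=
  stmt_1_general F hF x y hfin
end
end

section
/- Let 𝒳 ⊆ ℝⁿ be open and convex, 𝒪 ⊆ 𝒳 closed, 𝒳_free := closure(𝒳) \ interior(𝒪), and let x_a, x ∈ 𝒳_free. Then the following are equivalent: (i) there exists a path γ in 𝒳_free from x_a to x such that for all s, t ∈ [0,1] the point (1−t)·γ(s) + t·x_a does not lie in interior(𝒪); (ii) the segment [x_a, x] does not meet interior(𝒪). (This identifies the non-entangled free workspace of the Obstacle-free Linear Homotopy definition with the set of points visible from the anchor x_a.) -/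
/-!
At `s = 1` the contractions `(1 - t) • γ 1 + t • xa` of the endpoint `γ 1 = x` towards the
anchor sweep out exactly the segment `[xa, x]`, so (i) forces the segment to avoid the obstacle
interior. Conversely, if it does, the straight path from `xa` to `x` witnesses (i): it stays in
the convex set `closure 𝒳`, and contracting any of its points towards `xa` stays on `[xa, x]`.
-/

open Set

noncomputable section

section LinePath

variable {E : Type*} [AddCommGroup E] [Module ℝ E]

theorem linePath_mem_segment (p q : E) {s : ℝ} (hs : s ∈ Icc (0:ℝ) 1) :
    linePath p q s ∈ segment ℝ p q :=
  ⟨1 - s, s, by linarith [hs.2], hs.1, by ring, rfl⟩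

theorem isPathIn_linePath [TopologicalSpace E] [ContinuousAdd E] [ContinuousSMul ℝ E]
    {F : Set E} {p q : E} (hF : segment ℝ p q ⊆ F) : IsPathIn F (linePath p q) p q := by
  refine ⟨Continuous.continuousOn (by unfold linePath; fun_prop),
    fun s hs => hF (linePath_mem_segment p q hs), ?_, ?_⟩ <;> simp [linePath]

theorem linePath_contract_mem_segment (p q : E) {s t : ℝ} (hs : s ∈ Icc (0:ℝ) 1)
    (ht : t ∈ Icc (0:ℝ) 1) : (1 - t) • linePath p q s + t • p ∈ segment ℝ p q :=
  convex_segment p q (linePath_mem_segment p q hs) (left_mem_segment ℝ p q)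
    (by linarith [ht.2]) ht.1 (by ring)

theorem disjoint_segment_of_forall_notMem {B : Set E} {p q : E}
    (h : ∀ t ∈ Icc (0:ℝ) 1, (1 - t) • q + t • p ∉ B) : Disjoint (segment ℝ p q) B := by
  rw [segment_symm, segment_eq_image, Set.disjoint_left]
  rintro _ ⟨t, ht, rfl⟩
  exact h t ht

end LinePath

theorem stmt_4_general {n : ℕ} (𝒳 𝒪 : Set (EuclideanSpace ℝ (Fin n)))
    (hXconv : Convex ℝ 𝒳)
    (xa x : EuclideanSpace ℝ (Fin n))
    (hxa : xa ∈ closure 𝒳 \ interior 𝒪) (hx : x ∈ closure 𝒳 \ interior 𝒪) :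
    (∃ γ : ℝ → EuclideanSpace ℝ (Fin n),
        IsPathIn (closure 𝒳 \ interior 𝒪) γ xa x ∧
        ∀ s ∈ Icc (0:ℝ) 1, ∀ t ∈ Icc (0:ℝ) 1, (1 - t) • γ s + t • xa ∉ interior 𝒪) ↔
      segment ℝ xa x ∩ interior 𝒪 = ∅ := by
  rw [← disjoint_iff_inter_eq_empty]
  constructor
  · rintro ⟨γ, ⟨-, -, -, hγ1⟩, hcontract⟩
    refine disjoint_segment_of_forall_notMem fun t ht => ?_
    simpa only [hγ1] using hcontract 1 (right_mem_Icc.2 zero_le_one) t ht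
  · intro hseg
    have hsub : segment ℝ xa x ⊆ closure 𝒳 \ interior 𝒪 :=
      subset_sdiff.2 ⟨hXconv.closure.segment_subset hxa.1 hx.1, hseg⟩
    exact ⟨linePath xa x, isPathIn_linePath hsub, fun s hs t ht =>
      hseg.notMem_of_mem_left (linePath_contract_mem_segment xa x hs ht)⟩

/-- The non-entangled free workspace of the Obstacle-free Linear Homotopy definition is the
set of points visible from the anchor. -/
theorem stmt_4 {n : ℕ} (𝒳 𝒪 : Set (EuclideanSpace ℝ (Fin n)))
    (hXopen : IsOpen 𝒳) (hXconv : Convex ℝ 𝒳) (hOclosed : IsClosed 𝒪) (hOX : 𝒪 ⊆ 𝒳)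
    (xa x : EuclideanSpace ℝ (Fin n))
    (hxa : xa ∈ closure 𝒳 \ interior 𝒪) (hx : x ∈ closure 𝒳 \ interior 𝒪) :
    (∃ γ : ℝ → EuclideanSpace ℝ (Fin n),
        IsPathIn (closure 𝒳 \ interior 𝒪) γ xa x ∧
        ∀ s ∈ Icc (0:ℝ) 1, ∀ t ∈ Icc (0:ℝ) 1, (1 - t) • γ s + t • xa ∉ interior 𝒪) ↔
      segment ℝ xa x ∩ interior 𝒪 = ∅ :=
  stmt_4_general 𝒳 𝒪 hXconv xa x hxa hx
end
end

section
/- Let 𝒳 ⊆ ℝ² be open and convex, 𝒪 ⊆ 𝒳 closed, 𝒳_free := closure(𝒳) \ interior(𝒪), and let γ be a path in 𝒳_free such that convexHull(range γ) ∩ interior(𝒪) = ∅. Then for all 0 ≤ s₁ ≤ s₂ ≤ 1 with γ(s₁) = γ(s₂), the restricted path γ|[s₁,s₂] is path-homotopic within 𝒳_free to the constant path at γ(s₁). (Non-entanglement under the Obstacle-free Convex Hull definition implies non-entanglement under the 2D Tether Loop around Obstacle definition.) -/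
open Set

noncomputable section

/-!
The straight-line homotopy contracts the loop `γ|[s₁,s₂]` onto its base point inside the
convex hull of the range of `γ`. That hull lies in `closure 𝒳`, which is convex, and by
hypothesis it avoids `interior 𝒪`, so the homotopy never leaves the free workspace.
-/

theorem linePath_self {E : Type*} [AddCommGroup E] [Module ℝ E] (p : E) (t : ℝ) :
    linePath p p t = p := by
  rw [linePath, ← add_smul, sub_add_cancel, one_smul]

theorem PathHomotopicIn.mono {E : Type*} [TopologicalSpace E] {S T : Set E} {γ₀ γ₁ : ℝ → E}
    (h : PathHomotopicIn S γ₀ γ₁) (hST : S ⊆ T) : PathHomotopicIn T γ₀ γ₁ := by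
  obtain ⟨H, hcont, hmem, h0, h1, hleft, hright⟩ := h
  exact ⟨H, hcont, fun p hp => hST (hmem p hp), h0, h1, hleft, hright⟩

theorem Convex.pathHomotopicIn_const {E : Type*} [AddCommGroup E] [Module ℝ E]
    [TopologicalSpace E] [IsTopologicalAddGroup E] [ContinuousSMul ℝ E]
    {K : Set E} (hK : Convex ℝ K) {γ : ℝ → E} (hγ : ContinuousOn γ (Icc 0 1))
    (hmaps : MapsTo γ (Icc 0 1) K) (hloop : γ 1 = γ 0) :
    PathHomotopicIn K γ (fun _ => γ 0) := by
  refine ⟨fun p => linePath (γ p.1) (γ 0) p.2, ?_, ?_, ?_, ?_, ?_, ?_⟩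
  · exact ((continuousOn_const.sub continuousOn_snd).smul
      (hγ.comp continuousOn_fst fun p hp => hp.1)).add (continuousOn_snd.smul continuousOn_const)
  · rintro ⟨s, t⟩ ⟨hs, ht⟩
    exact hK (hmaps hs) (hmaps ⟨le_rfl, zero_le_one⟩) (sub_nonneg.2 ht.2) ht.1 (sub_add_cancel 1 t)
  · intro s _
    simp [linePath]
  · intro s _
    simp [linePath]
  · intro t _
    exact linePath_self _ _
  · intro t _
    simp only [hloop, linePath_self]

section subPath

variable {E : Type*} {γ : ℝ → E} {s₁ s₂ : ℝ}

theorem subPath_zero : subPath γ s₁ s₂ 0 = γ s₁ := by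
  simp [subPath]

theorem subPath_one : subPath γ s₁ s₂ 1 = γ s₂ := by
  simp [subPath]

theorem mapsTo_subPath_param (h0 : 0 ≤ s₁) (h12 : s₁ ≤ s₂) (h21 : s₂ ≤ 1) :
    MapsTo (fun s : ℝ => s₁ + s * (s₂ - s₁)) (Icc 0 1) (Icc 0 1) := by
  rintro s ⟨hs0, hs1⟩
  constructor <;> nlinarith

theorem MapsTo.subPath {S : Set E} (hγ : MapsTo γ (Icc 0 1) S)
    (h0 : 0 ≤ s₁) (h12 : s₁ ≤ s₂) (h21 : s₂ ≤ 1) : MapsTo (subPath γ s₁ s₂) (Icc 0 1) S :=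
  hγ.comp (mapsTo_subPath_param h0 h12 h21)

theorem ContinuousOn.subPath [TopologicalSpace E] (hγ : ContinuousOn γ (Icc 0 1))
    (h0 : 0 ≤ s₁) (h12 : s₁ ≤ s₂) (h21 : s₂ ≤ 1) : ContinuousOn (subPath γ s₁ s₂) (Icc 0 1) :=
  hγ.comp (by fun_prop) (mapsTo_subPath_param h0 h12 h21)

end subPath

theorem convexHull_subset_diff_of_inter_eq_empty {E : Type*} [AddCommGroup E] [Module ℝ E]
    {s C U : Set E} (hsC : s ⊆ C) (hC : Convex ℝ C) (hU : convexHull ℝ s ∩ U = ∅) :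
    convexHull ℝ s ⊆ C \ U :=
  fun _ hx => ⟨convexHull_min hsC hC hx, fun hxU => hU.subset ⟨hx, hxU⟩⟩

theorem stmt_9_general (𝒳 𝒪 : Set (EuclideanSpace ℝ (Fin 2)))
    (hXconv : Convex ℝ 𝒳)
    (γ : ℝ → EuclideanSpace ℝ (Fin 2))
    (hcont : ContinuousOn γ (Icc 0 1))
    (hmem : ∀ s ∈ Icc (0:ℝ) 1, γ s ∈ closure 𝒳 \ interior 𝒪)
    (hconv : convexHull ℝ (γ '' Icc 0 1) ∩ interior 𝒪 = ∅) :
    ∀ s₁ s₂ : ℝ, 0 ≤ s₁ → s₁ ≤ s₂ → s₂ ≤ 1 → γ s₁ = γ s₂ →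
      PathHomotopicIn (closure 𝒳 \ interior 𝒪) (subPath γ s₁ s₂) (fun _ => γ s₁) := by
  intro s₁ s₂ h0 h12 h21 hloop
  have hhull : convexHull ℝ (γ '' Icc 0 1) ⊆ closure 𝒳 \ interior 𝒪 :=
    convexHull_subset_diff_of_inter_eq_empty
      (image_subset_iff.2 fun s hs => (hmem s hs).1) hXconv.closure hconv
  have hmaps : MapsTo (subPath γ s₁ s₂) (Icc 0 1) (convexHull ℝ (γ '' Icc 0 1)) :=
    MapsTo.subPath ((mapsTo_image γ _).mono_right (subset_convexHull ℝ _)) h0 h12 h21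
  have hcontract := (convex_convexHull ℝ (γ '' Icc 0 1)).pathHomotopicIn_const
    (hcont.subPath h0 h12 h21) hmaps (by rw [subPath_one, subPath_zero, hloop])
  rw [subPath_zero] at hcontract
  exact hcontract.mono hhull

/-- Non-entanglement under the Obstacle-free Convex Hull definition implies
non-entanglement under the 2D Tether Loop around Obstacle definition. -/
theorem stmt_9 (𝒳 𝒪 : Set (EuclideanSpace ℝ (Fin 2)))
    (hXopen : IsOpen 𝒳) (hXconv : Convex ℝ 𝒳) (hOclosed : IsClosed 𝒪) (hOX : 𝒪 ⊆ 𝒳)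
    (γ : ℝ → EuclideanSpace ℝ (Fin 2))
    (hcont : ContinuousOn γ (Icc 0 1))
    (hmem : ∀ s ∈ Icc (0:ℝ) 1, γ s ∈ closure 𝒳 \ interior 𝒪)
    (hconv : convexHull ℝ (γ '' Icc 0 1) ∩ interior 𝒪 = ∅) :
    ∀ s₁ s₂ : ℝ, 0 ≤ s₁ → s₁ ≤ s₂ → s₂ ≤ 1 → γ s₁ = γ s₂ →
      PathHomotopicIn (closure 𝒳 \ interior 𝒪) (subPath γ s₁ s₂) (fun _ => γ s₁) :=
  stmt_9_general 𝒳 𝒪 hXconv γ hcont hmem hconv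
end
end

section
/- Let 𝒳 ⊆ ℝ² be open and convex, 𝒪 ⊆ 𝒳 closed, 𝒳_free := closure(𝒳) \ interior(𝒪), and let γ be a path in 𝒳_free with γ(0) = x_a such that for all s, t ∈ [0,1] the point (1−t)·γ(s) + t·x_a does not lie in interior(𝒪). Then for all 0 ≤ s₁ ≤ s₂ ≤ 1 with γ(s₁) = γ(s₂), the restricted path γ|[s₁,s₂] is path-homotopic within 𝒳_free to the constant path at γ(s₁). (Non-entanglement under the Obstacle-free Linear Homotopy definition implies non-entanglement under the 2D Tether Loop around Obstacle definition.) -/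
open Set

noncomputable section

/-!
The tether `γ` together with all the segments joining its points to the anchor `x_a` forms a
set star-shaped about `x_a`. By the hypothesis on the linear homotopy this set avoids the
interior of the obstacles, and by convexity it stays in `closure 𝒳`; being star-shaped it is
contractible, hence simply connected, so every loop of `γ` is null-homotopic inside it.
-/

section StarConvex

variable {𝕜 E : Type*} [Field 𝕜] [LinearOrder 𝕜] [IsStrictOrderedRing 𝕜] [AddCommGroup E]
  [Module 𝕜 E]

theorem starConvex_convexJoin_singleton_right (s : Set E) (x : E) :
    StarConvex 𝕜 x (convexJoin 𝕜 s {x}) := by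
  rw [convexJoin_singleton_right]
  exact starConvex_iUnion fun y => starConvex_iUnion fun _ =>
    (convex_segment y x).starConvex (right_mem_segment 𝕜 y x)

end StarConvex

namespace IsPathIn

variable {E : Type*} [TopologicalSpace E] {F : Set E} {γ : ℝ → E} {x y : E}

theorem source_mem (h : IsPathIn F γ x y) : x ∈ F := h.2.2.1 ▸ h.2.1 0 unitInterval.zero_mem

theorem target_mem (h : IsPathIn F γ x y) : y ∈ F := h.2.2.2 ▸ h.2.1 1 unitInterval.one_mem

theorem const (hx : x ∈ F) : IsPathIn F (fun _ => x) x x :=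
  ⟨continuousOn_const, fun _ _ => hx, rfl, rfl⟩

theorem subPath (h : IsPathIn F γ x y) {s₁ s₂ : ℝ} (hs₁ : 0 ≤ s₁) (hs₁₂ : s₁ ≤ s₂)
    (hs₂ : s₂ ≤ 1) : IsPathIn F (_root_.subPath γ s₁ s₂) (γ s₁) (γ s₂) := by
  have hmaps : MapsTo (fun s : ℝ => s₁ + s * (s₂ - s₁)) (Icc 0 1) (Icc 0 1) := fun s hs =>
    ⟨by nlinarith [hs.1], by nlinarith [hs.2]⟩
  refine ⟨h.1.comp (by fun_prop) hmaps, fun s hs => h.2.1 _ (hmaps hs), ?_, ?_⟩ <;>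
    simp [_root_.subPath]

def toPath (h : IsPathIn F γ x y) : Path (⟨x, h.source_mem⟩ : F) ⟨y, h.target_mem⟩ where
  toFun t := ⟨γ t, h.2.1 t t.2⟩
  continuous_toFun := h.1.domRestrict.subtype_mk _
  source' := Subtype.ext h.2.2.1
  target' := Subtype.ext h.2.2.2

theorem pathHomotopicIn_of_homotopic {S : Set E} {γ' : ℝ → E} (h : IsPathIn F γ x y)
    (h' : IsPathIn F γ' x y) (hFS : F ⊆ S) (hom : h.toPath.Homotopic h'.toPath) :
    PathHomotopicIn S γ γ' := by
  obtain ⟨G⟩ := hom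
  let proj : ℝ → unitInterval := projIcc 0 1 zero_le_one
  refine ⟨fun p => G (proj p.2, proj p.1), ?_, fun p _ => hFS (G _).2, ?_, ?_, ?_, ?_⟩
  · exact (continuous_subtype_val.comp (G.continuous.comp (by fun_prop))).continuousOn
  · intro s hs
    simp only [proj, projIcc_left, projIcc_of_mem _ hs]
    exact congrArg Subtype.val (G.apply_zero _)
  · intro s hs
    simp only [proj, projIcc_right, projIcc_of_mem _ hs]
    exact congrArg Subtype.val (G.apply_one _)
  · intro t _
    simp [proj, h.2.2.1]
  · intro t _
    simp [proj, h.2.2.2]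

theorem pathHomotopicIn_of_simplyConnected {S : Set E} {γ' : ℝ → E} [SimplyConnectedSpace F]
    (h : IsPathIn F γ x y) (h' : IsPathIn F γ' x y) (hFS : F ⊆ S) : PathHomotopicIn S γ γ' :=
  h.pathHomotopicIn_of_homotopic h' hFS (SimplyConnectedSpace.paths_homotopic _ _)

end IsPathIn

theorem stmt_12_general (𝒳 𝒪 : Set (EuclideanSpace ℝ (Fin 2)))
    (hXconv : Convex ℝ 𝒳)
    (γ : ℝ → EuclideanSpace ℝ (Fin 2)) (xa : EuclideanSpace ℝ (Fin 2))
    (hcont : ContinuousOn γ (Icc 0 1))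
    (hmem : ∀ s ∈ Icc (0:ℝ) 1, γ s ∈ closure 𝒳 \ interior 𝒪)
    (h0 : γ 0 = xa)
    (hlin : ∀ s ∈ Icc (0:ℝ) 1, ∀ t ∈ Icc (0:ℝ) 1, (1 - t) • γ s + t • xa ∉ interior 𝒪) :
    ∀ s₁ s₂ : ℝ, 0 ≤ s₁ → s₁ ≤ s₂ → s₂ ≤ 1 → γ s₁ = γ s₂ →
      PathHomotopicIn (closure 𝒳 \ interior 𝒪) (subPath γ s₁ s₂) (fun _ => γ s₁) := by
  intro s₁ s₂ hs₁ hs₁₂ hs₂ hloop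
  have hcone : convexJoin ℝ (γ '' Icc 0 1) {xa} ⊆ closure 𝒳 \ interior 𝒪 := by
    refine subset_inter ?_ ?_
    · refine convexJoin_subset ?_ ?_ hXconv.closure
      · exact image_subset_iff.2 fun s hs => (hmem s hs).1
      · exact singleton_subset_iff.2 (h0 ▸ (hmem 0 unitInterval.zero_mem).1)
    · intro z hz
      obtain ⟨_, ⟨s, hs, rfl⟩, _, rfl, hseg⟩ := mem_convexJoin.1 hz
      rw [segment_eq_image] at hseg
      obtain ⟨t, ht, rfl⟩ := hseg
      exact hlin s hs t ht
  have : ContractibleSpace (convexJoin ℝ (γ '' Icc 0 1) {xa}) :=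
    (starConvex_convexJoin_singleton_right _ xa).contractibleSpace
      ⟨xa, subset_convexJoin_right ⟨_, mem_image_of_mem γ unitInterval.zero_mem⟩ rfl⟩
  have hγ : IsPathIn (convexJoin ℝ (γ '' Icc 0 1) {xa}) γ xa (γ 1) :=
    ⟨hcont, fun s hs => subset_convexJoin_left (singleton_nonempty xa) (mem_image_of_mem γ hs),
      h0, rfl⟩
  have hsub := hγ.subPath hs₁ hs₁₂ hs₂
  rw [← hloop] at hsub
  exact hsub.pathHomotopicIn_of_simplyConnected (IsPathIn.const hsub.source_mem) hcone

/-- Non-entanglement under the Obstacle-free Linear Homotopy definition implies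
non-entanglement under the 2D Tether Loop around Obstacle definition. -/
theorem stmt_12 (𝒳 𝒪 : Set (EuclideanSpace ℝ (Fin 2)))
    (hXopen : IsOpen 𝒳) (hXconv : Convex ℝ 𝒳) (hOclosed : IsClosed 𝒪) (hOX : 𝒪 ⊆ 𝒳)
    (γ : ℝ → EuclideanSpace ℝ (Fin 2)) (xa : EuclideanSpace ℝ (Fin 2))
    (hcont : ContinuousOn γ (Icc 0 1))
    (hmem : ∀ s ∈ Icc (0:ℝ) 1, γ s ∈ closure 𝒳 \ interior 𝒪)
    (h0 : γ 0 = xa)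
    (hlin : ∀ s ∈ Icc (0:ℝ) 1, ∀ t ∈ Icc (0:ℝ) 1, (1 - t) • γ s + t • xa ∉ interior 𝒪) :
    ∀ s₁ s₂ : ℝ, 0 ≤ s₁ → s₁ ≤ s₂ → s₂ ≤ 1 → γ s₁ = γ s₂ →
      PathHomotopicIn (closure 𝒳 \ interior 𝒪) (subPath γ s₁ s₂) (fun _ => γ s₁) :=
  stmt_12_general 𝒳 𝒪 hXconv γ xa hcont hmem h0 hlin
end
end
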